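/- Let t ≥ 3 be an integer, and let Q be a t-mansion. Then every hole in Q is of length five; in particular, Q is (C_4, C_6, C_7)-free. -/

import Mathlib

/-!
Coarsen the mansion into three layers: the clique `T = A ∪ F ∪ X` on top, the cliques `B i` in the
middle and the clique `D = Y ∪ ⋃ i, C i` at the bottom. A hole meets each clique in at most two
consecutive vertices, so a hole of length at least six passes through some `B i`. Along a hole of
length at least five, a vertex of `B i` has one hole-neighbour in `T` and the other in `C i`;
following the hole from there forces the pattern `C i, B i, T, T, B k, C k`, and a top vertex
adjacent to `B i` but to neither `C i` nor `B k` lies in `X`, whence `i = k = j*`, a chord.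
Holes of length four die on the finer rules: `F` is the only part of `T` with neighbours in `D`
and sees each `B i ∪ C i` entirely or not at all, and the neighbourhoods of `B i` in `C i` are
nested.
-/

namespace Paper

open SimpleGraph

variable {V : Type} {W : Type}

/-- `G` contains no induced copy of `H` (there is no graph embedding of `H` into `G`). -/
def IndFree (G : SimpleGraph V) (H : SimpleGraph W) : Prop :=
  IsEmpty (H ↪g G)

/-- `2P₃`: the disjoint union of two paths on three vertices. -/
def twoP3 : SimpleGraph (Fin 3 ⊕ Fin 3) :=
  SimpleGraph.fromRel (fun u v =>
    match u, v with
    | Sum.inl a, Sum.inl b => (pathGraph 3).Adj a b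
    | Sum.inr a, Sum.inr b => (pathGraph 3).Adj a b
    | _, _ => False)

/-- `4K₁`: the edgeless graph on four vertices. -/
def fourK1 : SimpleGraph (Fin 4) := ⊥

/-- The cycle on `n` vertices (for `n ≥ 3`). -/
def cycleG (n : ℕ) : SimpleGraph (ZMod n) :=
  SimpleGraph.fromRel (fun u v => v = u + 1)

/-- The graph `T₀`: vertices `0,…,8` stand for `a₀,a₁,b₀,b₁,b₂,b₃,c₁,c₂,c₃`. -/
def T0 : SimpleGraph (Fin 9) :=
  SimpleGraph.fromRel (fun u v =>
    (u, v) ∈ ([(0,1),(0,2),(0,4),(0,5),(1,3),(1,4),(1,5),(2,6),(3,6),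
               (4,7),(5,8),(6,7),(6,8),(7,8)] : List (Fin 9 × Fin 9)))

/-- The `t`-pentagon: `Sum.inl ()` is the vertex `a`, `Sum.inr (Sum.inl i)` is `bᵢ`,
and `Sum.inr (Sum.inr i)` is `cᵢ`. -/
def pentagon (t : ℕ) : SimpleGraph (Unit ⊕ Fin t ⊕ Fin t) :=
  SimpleGraph.fromRel (fun u v =>
    match u, v with
    | Sum.inl _, Sum.inr (Sum.inl _) => True
    | Sum.inr (Sum.inl i), Sum.inr (Sum.inr j) => i = j
    | Sum.inr (Sum.inr _), Sum.inr (Sum.inr _) => True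
    | _, _ => False)

/-- `X` is complete to `Y` in `G`. -/
def CompleteTo (G : SimpleGraph V) (X Y : Set V) : Prop :=
  ∀ x ∈ X, ∀ y ∈ Y, G.Adj x y

/-- `X` is anticomplete to `Y` in `G`. -/
def AnticompleteTo (G : SimpleGraph V) (X Y : Set V) : Prop :=
  ∀ x ∈ X, ∀ y ∈ Y, ¬ G.Adj x y

/-- A simplicial vertex: its neighborhood is a clique. -/
def IsSimplicial (G : SimpleGraph V) (v : V) : Prop :=
  G.IsClique (G.neighborSet v)

/-- A universal vertex: adjacent to all other vertices. -/
def IsUniversal (G : SimpleGraph V) (v : V) : Prop :=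
  ∀ w, w ≠ v → G.Adj v w




/-- A 5-basket partition `(A; B 0, B 1, B 2; C 0, C 1, C 2; F)` of `Q`. -/
def IsFiveBasketPartition (Q : SimpleGraph W) (A : Set W) (B C : Fin 3 → Set W)
    (F : Set W) : Prop :=
  (∀ i, Disjoint A (B i)) ∧ (∀ i, Disjoint A (C i)) ∧ Disjoint A F ∧
  (∀ i j, i ≠ j → Disjoint (B i) (B j)) ∧
  (∀ i j, i ≠ j → Disjoint (C i) (C j)) ∧
  (∀ i j, Disjoint (B i) (C j)) ∧
  (∀ i, Disjoint (B i) F) ∧ (∀ i, Disjoint (C i) F) ∧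
  (A ∪ (⋃ i, B i) ∪ (⋃ i, C i) ∪ F = Set.univ) ∧
  Q.IsClique A ∧ (∀ i, Q.IsClique (B i)) ∧ (∀ i, Q.IsClique (C i)) ∧ Q.IsClique F ∧
  A.Nonempty ∧ (∀ i, (B i).Nonempty) ∧ (∀ i, (C i).Nonempty) ∧
  (∀ i j, i ≠ j → AnticompleteTo Q (B i) (B j)) ∧
  (∀ i j, i ≠ j → CompleteTo Q (C i) (C j)) ∧
  (∀ i, AnticompleteTo Q A (C i)) ∧
  (∀ i, CompleteTo Q (B i) (C i)) ∧
  (∀ i j, i ≠ j → AnticompleteTo Q (B i) (C j)) ∧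
  (∃ istar : Fin 3,
    (∀ i, i ≠ istar → CompleteTo Q A (B i)) ∧
    (∀ a ∈ A, ∀ a' ∈ A,
      Q.neighborSet a ∩ B istar ⊆ Q.neighborSet a' ∩ B istar ∨
      Q.neighborSet a' ∩ B istar ⊆ Q.neighborSet a ∩ B istar) ∧
    (∃ a ∈ A, B istar ⊆ Q.neighborSet a)) ∧
  (∃ jstar : Fin 3,
    CompleteTo Q F (B jstar ∪ C jstar ∪ F)ᶜ ∧
    AnticompleteTo Q F (B jstar ∪ C jstar))

/-- A 5-basket. -/
def IsFiveBasket (Q : SimpleGraph W) : Prop :=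
  ∃ (A : Set W) (B C : Fin 3 → Set W) (F : Set W), IsFiveBasketPartition Q A B C F

/-- All conditions of a `t`-villa partition except that the parts exhaust the vertex set. -/
def VillaCore {t : ℕ} (Q : SimpleGraph W) (A : Set W) (B C : Fin t → Set W) : Prop :=
  (∀ i, Disjoint A (B i)) ∧ (∀ i, Disjoint A (C i)) ∧
  (∀ i j, i ≠ j → Disjoint (B i) (B j)) ∧
  (∀ i j, i ≠ j → Disjoint (C i) (C j)) ∧
  (∀ i j, Disjoint (B i) (C j)) ∧
  Q.IsClique A ∧ (∀ i, Q.IsClique (B i)) ∧ (∀ i, Q.IsClique (C i)) ∧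
  A.Nonempty ∧ (∀ i, (B i).Nonempty) ∧ (∀ i, (C i).Nonempty) ∧
  (∀ i, CompleteTo Q A (B i)) ∧ (∀ i, AnticompleteTo Q A (C i)) ∧
  (∀ i j, i ≠ j → AnticompleteTo Q (B i) (B j)) ∧
  (∀ i j, i ≠ j → CompleteTo Q (C i) (C j)) ∧
  (∀ i j, i ≠ j → AnticompleteTo Q (B i) (C j)) ∧
  (∀ i, ∀ b ∈ B i, ∀ b' ∈ B i,
     Q.neighborSet b ∩ C i ⊆ Q.neighborSet b' ∩ C i ∨
     Q.neighborSet b' ∩ C i ⊆ Q.neighborSet b ∩ C i) ∧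
  (∀ i, ∀ b ∈ B i, (Q.neighborSet b ∩ C i).Nonempty) ∧
  (∀ i, ∃ b ∈ B i, C i ⊆ Q.neighborSet b)

/-- A `t`-villa partition `(A; B 0,…,B (t-1); C 0,…,C (t-1))` of `Q`. -/
def IsVillaPartition {t : ℕ} (Q : SimpleGraph W) (A : Set W) (B C : Fin t → Set W) : Prop :=
  VillaCore Q A B C ∧ A ∪ (⋃ i, B i) ∪ (⋃ i, C i) = Set.univ

/-- A `t`-villa. -/
def IsTVilla (t : ℕ) (Q : SimpleGraph W) : Prop :=
  ∃ (A : Set W) (B C : Fin t → Set W), IsVillaPartition Q A B C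

/-- A villa: a `t`-villa for some `t ≥ 3`. -/
def IsVilla (Q : SimpleGraph W) : Prop :=
  ∃ t, 3 ≤ t ∧ IsTVilla t Q

/-- A `t`-mansion partition `(A; B; C; F; X; Y)` of `Q`. -/
def IsMansionPartition {t : ℕ} (Q : SimpleGraph W) (A : Set W) (B C : Fin t → Set W)
    (F X Y : Set W) : Prop :=
  VillaCore Q A B C ∧
  Disjoint A F ∧ Disjoint A X ∧ Disjoint A Y ∧
  (∀ i, Disjoint (B i) F) ∧ (∀ i, Disjoint (B i) X) ∧ (∀ i, Disjoint (B i) Y) ∧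
  (∀ i, Disjoint (C i) F) ∧ (∀ i, Disjoint (C i) X) ∧ (∀ i, Disjoint (C i) Y) ∧
  Disjoint F X ∧ Disjoint F Y ∧ Disjoint X Y ∧
  (A ∪ (⋃ i, B i) ∪ (⋃ i, C i) ∪ F ∪ X ∪ Y = Set.univ) ∧
  Q.IsClique F ∧ Q.IsClique X ∧ Q.IsClique Y ∧ F.Nonempty ∧
  (∃ jstar : Fin t,
    CompleteTo Q F A ∧
    (∀ i, i ≠ jstar → CompleteTo Q F (B i)) ∧
    (∀ i, i ≠ jstar → CompleteTo Q F (C i)) ∧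
    AnticompleteTo Q F (B jstar) ∧ AnticompleteTo Q F (C jstar) ∧
    CompleteTo Q (B jstar) (C jstar) ∧
    CompleteTo Q X A ∧ CompleteTo Q X (B jstar) ∧
    (∀ i, i ≠ jstar → AnticompleteTo Q X (B i)) ∧
    (∀ i, AnticompleteTo Q X (C i))) ∧
  CompleteTo Q F X ∧ CompleteTo Q F Y ∧
  AnticompleteTo Q X Y ∧
  (∀ i, CompleteTo Q Y (C i)) ∧
  AnticompleteTo Q Y A ∧ (∀ i, AnticompleteTo Q Y (B i))

/-- A `t`-mansion. -/
def IsTMansion (t : ℕ) (Q : SimpleGraph W) : Prop :=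
  ∃ (A : Set W) (B C : Fin t → Set W) (F X Y : Set W),
    IsMansionPartition Q A B C F X Y

/-- A mansion: a `t`-mansion for some `t ≥ 3`. -/
def IsMansion (Q : SimpleGraph W) : Prop :=
  ∃ t, 3 ≤ t ∧ IsTMansion t Q

/-- A `t`-frame partition of `Q`. -/
def IsFramePartition {t : ℕ} (Q : SimpleGraph W) (A : Set W) (B C : Fin t → Set W) : Prop :=
  (∀ i, Disjoint A (B i)) ∧ (∀ i, Disjoint A (C i)) ∧
  (∀ i j, i ≠ j → Disjoint (B i) (B j)) ∧
  (∀ i j, i ≠ j → Disjoint (C i) (C j)) ∧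
  (∀ i j, Disjoint (B i) (C j)) ∧
  (A ∪ (⋃ i, B i) ∪ (⋃ i, C i) = Set.univ) ∧
  A.Nonempty ∧ (∀ i, (B i).Nonempty) ∧ (∀ i, (C i).Nonempty) ∧
  (∀ a ∈ A, ∃ i j : Fin t, i ≠ j ∧ (∃ b ∈ B i, Q.Adj a b) ∧ (∃ b ∈ B j, Q.Adj a b)) ∧
  (∀ i, AnticompleteTo Q A (C i)) ∧
  (∀ i j, i ≠ j → AnticompleteTo Q (B i) (B j)) ∧
  (∀ i j, i ≠ j → CompleteTo Q (C i) (C j)) ∧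
  (∀ i j, i ≠ j → AnticompleteTo Q (B i) (C j)) ∧
  (∀ i, ∀ b ∈ B i, ∃ a ∈ A, Q.Adj b a) ∧
  (∀ i, ∀ b ∈ B i, ∃ c ∈ C i, Q.Adj b c) ∧
  (∀ i, ∀ c ∈ C i, ∃ b ∈ B i, Q.Adj c b)

/-- A `k`-ring partition of `Q` (indices modulo `k`). -/
def IsRingPartition {k : ℕ} (Q : SimpleGraph W) (X : ZMod k → Set W) : Prop :=
  (∀ i j, i ≠ j → Disjoint (X i) (X j)) ∧
  (⋃ i, X i) = Set.univ ∧
  (∀ i, (X i).Nonempty) ∧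
  (∀ i, ∀ u ∈ X i, X i ⊆ insert u (Q.neighborSet u)) ∧
  (∀ i, ∀ u ∈ X i, ∀ u' ∈ X i,
     insert u (Q.neighborSet u) ⊆ insert u' (Q.neighborSet u') ∨
     insert u' (Q.neighborSet u') ⊆ insert u (Q.neighborSet u)) ∧
  (∀ i, ∀ u ∈ X i, insert u (Q.neighborSet u) ⊆ X (i-1) ∪ X i ∪ X (i+1)) ∧
  (∀ i, ∃ u ∈ X i, X (i-1) ∪ X i ∪ X (i+1) ⊆ insert u (Q.neighborSet u))

/-- A `k`-ring. -/
def IsRing (k : ℕ) (Q : SimpleGraph W) : Prop :=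
  ∃ X : ZMod k → Set W, IsRingPartition Q X

/-- A 5-crown. -/
def IsFiveCrown (Q : SimpleGraph W) : Prop :=
  ∃ X : ZMod 5 → Set W, IsRingPartition Q X ∧
    ∃ istar : ZMod 5, CompleteTo Q (X (istar - 1)) (X (istar - 2)) ∧
      CompleteTo Q (X (istar + 1)) (X (istar + 2))

/-- `w` runs around an induced cycle of length `n` of `Q`: any `n` consecutive values of `w` are
distinct and induce the cycle `w a, w (a + 1), …, w (a + n - 1)`. No periodicity is imposed, so
shifts and reflections of `w` are again of this form. -/
def IsHoleSeq (Q : SimpleGraph W) (n : ℕ) (w : ℤ → W) : Prop :=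
  ∀ a b : ℤ, a < b → b < a + n → w a ≠ w b ∧ (Q.Adj (w a) (w b) ↔ b = a + 1 ∨ b = a + n - 1)

namespace IsHoleSeq

variable {Q : SimpleGraph W} {n : ℕ} {w : ℤ → W}

theorem shift (hw : IsHoleSeq Q n w) (k : ℤ) : IsHoleSeq Q n (fun a => w (a + k)) := by
  intro a b h₁ h₂
  obtain ⟨hne, hadj⟩ := hw (a + k) (b + k) (by omega) (by omega)
  exact ⟨hne, hadj.trans (by omega)⟩

theorem reflect (hw : IsHoleSeq Q n w) (k : ℤ) : IsHoleSeq Q n (fun a => w (k - a)) := by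
  intro a b h₁ h₂
  obtain ⟨hne, hadj⟩ := hw (k - b) (k - a) (by omega) (by omega)
  exact ⟨hne.symm, Q.adj_comm _ _ |>.trans (hadj.trans (by omega))⟩

theorem adj (hw : IsHoleSeq Q n w) (hn : 2 ≤ n) (a : ℤ) : Q.Adj (w a) (w (a + 1)) :=
  (hw a (a + 1) (by omega) (by omega)).2.2 (Or.inl rfl)

theorem not_adj (hw : IsHoleSeq Q n w) {a b : ℤ} (h₁ : a + 2 ≤ b) (h₂ : b + 2 ≤ a + n) :
    ¬ Q.Adj (w a) (w b) := fun h => by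
  have := (hw a b (by omega) (by omega)).2.1 h
  omega

theorem false_of_mem_clique (hw : IsHoleSeq Q n w) {K : Set W} (hK : Q.IsClique K) {a b : ℤ}
    (ha : w a ∈ K) (hb : w b ∈ K) (h₁ : a + 2 ≤ b) (h₂ : b + 2 ≤ a + n) : False :=
  hw.not_adj h₁ h₂ (hK ha hb (hw a b (by omega) (by omega)).1)

end IsHoleSeq

theorem intCast_ne_of_lt {n : ℕ} {a b : ℤ} (h₁ : a < b) (h₂ : b < a + n) :
    ((a : ℤ) : ZMod n) ≠ b := fun h => by
  have := Int.eq_zero_of_abs_lt_dvd ((ZMod.intCast_eq_intCast_iff_dvd_sub _ _ _).1 h)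
    (abs_lt.2 ⟨by omega, by omega⟩)
  omega

theorem cycleG_adj_intCast_iff {n : ℕ} {a b : ℤ} (h₁ : a < b) (h₂ : b < a + n) :
    (cycleG n).Adj a b ↔ b = a + 1 ∨ b = a + n - 1 := by
  have hsucc : ((b : ℤ) : ZMod n) = a + 1 ↔ b = a + 1 := by
    rw [← Int.cast_one, ← Int.cast_add, ZMod.intCast_eq_intCast_iff_dvd_sub]
    refine ⟨fun h => ?_, fun h => by simp [h]⟩
    have := Int.eq_zero_of_abs_lt_dvd h (abs_lt.2 ⟨by omega, by omega⟩)
    omega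
  have hpred : ((a : ℤ) : ZMod n) = b + 1 ↔ b = a + n - 1 := by
    rw [← Int.cast_one, ← Int.cast_add, ZMod.intCast_eq_intCast_iff_dvd_sub]
    refine ⟨fun h => ?_, fun h => ⟨1, by rw [h]; ring⟩⟩
    have := Int.eq_zero_of_abs_lt_dvd (dvd_sub h dvd_rfl) (abs_lt.2 ⟨by omega, by omega⟩)
    omega
  simp only [cycleG, fromRel_adj, ne_eq, intCast_ne_of_lt h₁ h₂, not_false_eq_true, true_and,
    hsucc, hpred]

theorem isHoleSeq_of_embedding {Q : SimpleGraph W} {n : ℕ} (f : cycleG n ↪g Q) :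
    IsHoleSeq Q n (fun a => f a) := fun _ _ h₁ h₂ =>
  ⟨f.injective.ne (intCast_ne_of_lt h₁ h₂), f.map_adj_iff.trans (cycleG_adj_intCast_iff h₁ h₂)⟩

theorem isClique_union {Q : SimpleGraph W} {s s' : Set W} (hs : Q.IsClique s)
    (hs' : Q.IsClique s') (h : CompleteTo Q s s') : Q.IsClique (s ∪ s') :=
  Set.pairwise_union.2 ⟨hs, hs', fun a ha b hb _ => ⟨h a ha b hb, (h a ha b hb).symm⟩⟩

theorem isClique_iUnion {ι : Type*} {Q : SimpleGraph W} {s : ι → Set W}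
    (hs : ∀ i, Q.IsClique (s i)) (h : ∀ i k, i ≠ k → CompleteTo Q (s i) (s k)) :
    Q.IsClique (⋃ i, s i) := by
  intro x hx y hy hxy
  obtain ⟨i, hi⟩ := Set.mem_iUnion.1 hx
  obtain ⟨k, hk⟩ := Set.mem_iUnion.1 hy
  by_cases hik : i = k
  · exact hs k (hik ▸ hi) hk hxy
  · exact h i k hik x hi y hk

open Function in
/-- The three layers of a mansion: the clique `T = A ∪ F ∪ X` on top, the cliques `B i` in the
middle and the clique `D = Y ∪ ⋃ i, C i` at the bottom; `j` plays the role of `j*`. -/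
structure LayeredPartition {ι : Type*} (Q : SimpleGraph W) (T D : Set W) (B C : ι → Set W)
    (j : ι) : Prop where
  cover : ∀ v, v ∈ T ∨ (∃ i, v ∈ B i) ∨ v ∈ D
  isClique_top : Q.IsClique T
  isClique_bot : Q.IsClique D
  isClique_mid : ∀ i, Q.IsClique (B i)
  C_subset : ∀ i, C i ⊆ D
  C_disjoint : Pairwise (Disjoint on C)
  eq_of_adj_mid : ∀ {i k b b'}, b ∈ B i → b' ∈ B k → Q.Adj b b' → i = k
  mem_C_of_adj_mid : ∀ {i b d}, b ∈ B i → d ∈ D → Q.Adj b d → d ∈ C i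
  adj_top_mid : ∀ {i t b b'}, t ∈ T → b ∈ B i → b' ∈ B i → Q.Adj t b → Q.Adj t b'
  adj_top_bot : ∀ {t t' d d'}, t ∈ T → t' ∈ T → d ∈ D → d' ∈ D →
    Q.Adj t d → Q.Adj t' d' → Q.Adj t d'
  adj_of_adj_top_bot : ∀ {i t d u u'}, t ∈ T → d ∈ D → Q.Adj t d →
    u ∈ B i ∪ C i → u' ∈ B i ∪ C i → Q.Adj t u → Q.Adj t u'
  eq_of_adj_top_mid : ∀ {i k t b c b'}, t ∈ T → b ∈ B i → c ∈ C i → b' ∈ B k →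
    Q.Adj t b → ¬ Q.Adj t c → ¬ Q.Adj t b' → i = j
  nested : ∀ i, ∀ b ∈ B i, ∀ b' ∈ B i,
    Q.neighborSet b ∩ C i ⊆ Q.neighborSet b' ∩ C i ∨
    Q.neighborSet b' ∩ C i ⊆ Q.neighborSet b ∩ C i

namespace LayeredPartition

variable {ι : Type*} {Q : SimpleGraph W} {T D : Set W} {B C : ι → Set W} {j : ι}
  {n : ℕ} {w : ℤ → W} {i : ι}

theorem mem_of_adj_mid (L : LayeredPartition Q T D B C j) {b v : W} (hb : b ∈ B i)
    (h : Q.Adj b v) : v ∈ T ∨ v ∈ B i ∨ v ∈ C i := by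
  rcases L.cover v with hv | ⟨k, hv⟩ | hv
  · exact .inl hv
  · exact .inr (.inl ((L.eq_of_adj_mid hb hv h).symm ▸ hv))
  · exact .inr (.inr (L.mem_C_of_adj_mid hb hv h))

theorem eq_of_mem_C (L : LayeredPartition Q T D B C j) {k : ι} {c : W} (hi : c ∈ C i)
    (hk : c ∈ C k) : i = k :=
  L.C_disjoint.eq (Set.not_disjoint_iff.2 ⟨c, hi, hk⟩)

variable (L : LayeredPartition Q T D B C j) (hw : IsHoleSeq Q n w)
include L hw

theorem mem_C_of_mid_mid (hn : 4 ≤ n) (h0 : w 0 ∈ B i) (h1 : w 1 ∈ B i) : w 2 ∈ C i := by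
  have h02 : ¬ Q.Adj (w 0) (w 2) := hw.not_adj (by norm_num) (by omega)
  rcases L.mem_of_adj_mid h1 (hw.adj (by omega) 1) with h2 | h2 | h2
  · exact absurd (L.adj_top_mid h2 h1 h0 (hw.adj (by omega) 1).symm).symm h02
  · exact (hw.false_of_mem_clique (L.isClique_mid i) h0 h2 (by norm_num) (by omega)).elim
  · exact h2

theorem not_mid_mid (hn : 5 ≤ n) {k : ι} (h0 : w 0 ∈ B i) (h1 : w 1 ∈ B k) : False := by
  have h1' : w 1 ∈ B i := (L.eq_of_adj_mid h0 h1 (hw.adj (by omega) 0)).symm ▸ h1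
  have h2 := L.mem_C_of_mid_mid hw (by omega) h0 h1'
  -- reflecting about `1/2` swaps `w 0` and `w 1` and sends `w 2` to `w (-1)`
  have hm1 : w (-1) ∈ C i := L.mem_C_of_mid_mid (hw.reflect 1) (by omega) h1' h0
  exact hw.false_of_mem_clique L.isClique_bot (L.C_subset i hm1) (L.C_subset i h2)
    (by norm_num) (by omega)

theorem neighbors_of_mid (hn : 5 ≤ n) (h0 : w 0 ∈ B i) :
    (w 1 ∈ T ∧ w (-1) ∈ C i) ∨ (w (-1) ∈ T ∧ w 1 ∈ C i) := by
  have right : w 1 ∈ T ∨ w 1 ∈ C i :=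
    (L.mem_of_adj_mid h0 (hw.adj (by omega) 0)).imp_right
      (·.resolve_left fun h1 => L.not_mid_mid hw hn h0 h1)
  have left : w (-1) ∈ T ∨ w (-1) ∈ C i :=
    (L.mem_of_adj_mid h0 (hw.adj (by omega) (-1) : Q.Adj (w (-1)) (w 0)).symm).imp_right
      (·.resolve_left fun hm1 => L.not_mid_mid (hw.shift (-1)) hn hm1 h0)
  rcases right with h1 | h1 <;> rcases left with hm1 | hm1
  · exact (hw.false_of_mem_clique L.isClique_top hm1 h1 (by norm_num) (by omega)).elim
  · exact .inl ⟨h1, hm1⟩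
  · exact .inr ⟨hm1, h1⟩
  · exact (hw.false_of_mem_clique L.isClique_bot (L.C_subset i hm1) (L.C_subset i h1)
      (by norm_num) (by omega)).elim

theorem not_hole_ge_six_of_mid_top_C (hn : 6 ≤ n) (h0 : w 0 ∈ B i) (h1 : w 1 ∈ T)
    (hm1 : w (-1) ∈ C i) : False := by
  have farBot : ∀ {a : ℤ}, 1 ≤ a → a ≤ 3 → w a ∉ D := fun ha₁ ha₃ ha =>
    hw.false_of_mem_clique L.isClique_bot (L.C_subset i hm1) ha (by omega) (by omega)
  rcases L.cover (w 2) with h2 | ⟨k, h2⟩ | h2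
  · rcases L.cover (w 3) with h3 | ⟨k, h3⟩ | h3
    · exact hw.false_of_mem_clique L.isClique_top h1 h3 (by norm_num) (by omega)
    · rcases L.neighbors_of_mid (hw.shift 3) (by omega) h3 with ⟨h4, -⟩ | ⟨-, h4⟩
      · exact hw.false_of_mem_clique L.isClique_top h2 h4 (by norm_num) (by omega)
      · have hi : i = j := L.eq_of_adj_top_mid h1 h0 hm1 h3 (hw.adj (by omega) 0).symm
          (mt Adj.symm (hw.not_adj (by norm_num) (by omega))) (hw.not_adj (by norm_num) (by omega))
        have hk : k = j := L.eq_of_adj_top_mid h2 h3 h4 h0 (hw.adj (by omega) 2)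
          (hw.not_adj (by norm_num) (by omega)) (mt Adj.symm (hw.not_adj (by norm_num) (by omega)))
        exact hw.false_of_mem_clique (L.isClique_mid j) (hi ▸ h0) (hk ▸ h3) (by norm_num)
          (by omega)
    · exact farBot (by norm_num) (by norm_num) h3
  · rcases L.neighbors_of_mid (hw.shift 2) (by omega) h2 with ⟨h3, -⟩ | ⟨-, h3⟩
    · exact hw.false_of_mem_clique L.isClique_top h1 h3 (by norm_num) (by omega)
    · exact farBot (by norm_num) (by norm_num) (L.C_subset k h3)
  · exact farBot (by norm_num) (by norm_num) h2

theorem not_hole_ge_six_of_mid (hn : 6 ≤ n) (h0 : w 0 ∈ B i) : False := by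
  rcases L.neighbors_of_mid hw (by omega) h0 with ⟨h1, hm1⟩ | ⟨hm1, h1⟩
  · exact L.not_hole_ge_six_of_mid_top_C hw hn h0 h1 hm1
  · exact L.not_hole_ge_six_of_mid_top_C (hw.reflect 0) hn h0 hm1 h1

theorem not_hole_four_of_mid_top_C (hn : n = 4) (h0 : w 0 ∈ B i) (h1 : w 1 ∈ T)
    (hm1 : w (-1) ∈ C i) : False := by
  subst hn
  have e12 : Q.Adj (w 1) (w 2) := hw.adj (by omega) 1
  have e2 : Q.Adj (w 2) (w (-1)) := ((hw (-1) 2 (by omega) (by omega)).2.2 (by omega)).symm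
  rcases L.cover (w 2) with h2 | ⟨k, h2⟩ | h2
  · exact hw.not_adj (by omega) (by omega)
      (L.adj_of_adj_top_bot h2 (L.C_subset i hm1) e2 (.inr hm1) (.inl h0) e2).symm
  · have hk : k = i := L.eq_of_mem_C (L.mem_C_of_adj_mid h2 (L.C_subset i hm1) e2) hm1
    exact hw.false_of_mem_clique (L.isClique_mid i) h0 (hk ▸ h2) (by omega) (by omega)
  · exact hw.not_adj (by omega) (by omega)
      (L.adj_of_adj_top_bot h1 h2 e12 (.inl h0) (.inr hm1) (hw.adj (by omega) 0).symm).symm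

theorem not_hole_four_of_mid_mid_C (hn : n = 4) (h0 : w 0 ∈ B i) (h1 : w 1 ∈ B i)
    (hm1 : w (-1) ∈ C i) : False := by
  have h2 : w 2 ∈ C i := L.mem_C_of_mid_mid hw (by omega) h0 h1
  rcases L.nested i _ h0 _ h1 with h | h
  · exact hw.not_adj (by omega) (by omega)
      (h ⟨(hw.adj (by omega) (-1) : Q.Adj (w (-1)) (w 0)).symm, hm1⟩).1.symm
  · exact hw.not_adj (by omega) (by omega) (h ⟨hw.adj (by omega) 1, h2⟩).1

theorem not_hole_four_of_mid (hn : n = 4) (h0 : w 0 ∈ B i) : False := by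
  have e01 : Q.Adj (w 0) (w 1) := hw.adj (by omega) 0
  have e0m1 : Q.Adj (w 0) (w (-1)) := (hw.adj (by omega) (-1) : Q.Adj (w (-1)) (w 0)).symm
  have n1 : ¬ Q.Adj (w (-1)) (w 1) := hw.not_adj (by omega) (by omega)
  rcases L.mem_of_adj_mid h0 e01 with h1 | h1 | h1 <;>
    rcases L.mem_of_adj_mid h0 e0m1 with hm1 | hm1 | hm1
  · exact hw.false_of_mem_clique L.isClique_top hm1 h1 (by omega) (by omega)
  · exact n1 (L.adj_top_mid h1 h0 hm1 e01.symm).symm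
  · exact L.not_hole_four_of_mid_top_C hw hn h0 h1 hm1
  · exact n1 (L.adj_top_mid hm1 h0 h1 e0m1.symm)
  · exact hw.false_of_mem_clique (L.isClique_mid i) hm1 h1 (by omega) (by omega)
  · exact L.not_hole_four_of_mid_mid_C hw hn h0 h1 hm1
  · exact L.not_hole_four_of_mid_top_C (hw.reflect 0) hn h0 hm1 h1
  · exact L.not_hole_four_of_mid_mid_C (hw.reflect 0) hn h0 hm1 h1
  · exact hw.false_of_mem_clique L.isClique_bot (L.C_subset i hm1) (L.C_subset i h1)
      (by omega) (by omega)

section TopBot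

variable (hTD : ∀ a, w a ∈ T ∨ w a ∈ D)
include hTD

theorem mem_bot_of_mem_top {a b : ℤ} (h₁ : a + 2 ≤ b) (h₂ : b + 2 ≤ a + n) (ha : w a ∈ T) :
    w b ∈ D :=
  (hTD b).resolve_left fun hb => hw.false_of_mem_clique L.isClique_top ha hb h₁ h₂

theorem mem_top_of_mem_bot {a b : ℤ} (h₁ : a + 2 ≤ b) (h₂ : b + 2 ≤ a + n) (ha : w a ∈ D) :
    w b ∈ T :=
  (hTD b).resolve_right fun hb => hw.false_of_mem_clique L.isClique_bot ha hb h₁ h₂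

theorem not_hole_ge_six_of_top_bot (hn : 6 ≤ n) : False := by
  rcases hTD 0 with h0 | h0
  · exact hw.false_of_mem_clique L.isClique_bot
      (L.mem_bot_of_mem_top hw hTD (b := 2) (by omega) (by omega) h0)
      (L.mem_bot_of_mem_top hw hTD (b := 4) (by omega) (by omega) h0) (by omega) (by omega)
  · exact hw.false_of_mem_clique L.isClique_top
      (L.mem_top_of_mem_bot hw hTD (b := 2) (by omega) (by omega) h0)
      (L.mem_top_of_mem_bot hw hTD (b := 4) (by omega) (by omega) h0) (by omega) (by omega)

theorem not_hole_four_of_top_bot (hn : n = 4) : False := by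
  have e : ∀ a : ℤ, Q.Adj (w a) (w (a + 1)) := hw.adj (by omega)
  have e03 : Q.Adj (w 0) (w 3) := (hw 0 3 (by omega) (by omega)).2.2 (by omega)
  have n02 : ¬ Q.Adj (w 0) (w 2) := hw.not_adj (by omega) (by omega)
  have n13 : ¬ Q.Adj (w 1) (w 3) := hw.not_adj (by omega) (by omega)
  rcases hTD 0 with h0 | h0 <;> rcases hTD 1 with h1 | h1
  · have h2 : w 2 ∈ D := L.mem_bot_of_mem_top hw hTD (by omega) (by omega) h0
    have h3 : w 3 ∈ D := L.mem_bot_of_mem_top hw hTD (by omega) (by omega) h1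
    exact n13 (L.adj_top_bot h1 h0 h2 h3 (e 1) e03)
  · have h2 : w 2 ∈ D := L.mem_bot_of_mem_top hw hTD (by omega) (by omega) h0
    have h3 : w 3 ∈ T := L.mem_top_of_mem_bot hw hTD (by omega) (by omega) h1
    exact n02 (L.adj_top_bot h0 h3 h1 h2 (e 0) (e 2).symm)
  · have h2 : w 2 ∈ T := L.mem_top_of_mem_bot hw hTD (by omega) (by omega) h0
    have h3 : w 3 ∈ D := L.mem_bot_of_mem_top hw hTD (by omega) (by omega) h1
    exact n13 (L.adj_top_bot h1 h2 h0 h3 (e 0).symm (e 2))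
  · have h2 : w 2 ∈ T := L.mem_top_of_mem_bot hw hTD (by omega) (by omega) h0
    have h3 : w 3 ∈ T := L.mem_top_of_mem_bot hw hTD (by omega) (by omega) h1
    exact n13 (L.adj_top_bot h3 h2 h0 h1 e03.symm (e 1).symm).symm

end TopBot

theorem eq_five (hn : 4 ≤ n) : n = 5 := by
  by_contra h5
  by_cases hB : ∃ a i, w a ∈ B i
  · obtain ⟨a, i, ha⟩ := hB
    have h0 : (fun x => w (x + a)) 0 ∈ B i := by simpa using ha
    rcases (by omega : n = 4 ∨ 6 ≤ n) with hn | hn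
    · exact L.not_hole_four_of_mid (hw.shift a) hn h0
    · exact L.not_hole_ge_six_of_mid (hw.shift a) hn h0
  · have hTD : ∀ a, w a ∈ T ∨ w a ∈ D := fun a =>
      (L.cover (w a)).imp_right (·.resolve_left fun ⟨i, h⟩ => hB ⟨a, i, h⟩)
    rcases (by omega : n = 4 ∨ 6 ≤ n) with hn | hn
    · exact L.not_hole_four_of_top_bot hw hTD hn
    · exact L.not_hole_ge_six_of_top_bot hw hTD hn

end LayeredPartition

theorem IsMansionPartition.exists_layeredPartition {t : ℕ} {Q : SimpleGraph W} {A : Set W}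
    {B C : Fin t → Set W} {F X Y : Set W} (hM : IsMansionPartition Q A B C F X Y) :
    ∃ j, LayeredPartition Q (A ∪ F ∪ X) (Y ∪ ⋃ i, C i) B C j := by
  obtain ⟨⟨-, -, -, dCC, -, cliqA, cliqB, cliqC, -, -, -, hAB, hAC, hBB, hCC, hBC, hnest, -, -⟩,
    -, -, -, -, -, -, -, -, -, -, -, -, hcover, cliqF, cliqX, cliqY, -,
    ⟨j, hFA, hFB, hFC, hFBj, hFCj, -, hXA, hXBj, hXB, hXC⟩, hFX, hFY, hXY, hYC, hYA, hYB⟩ := hM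
  have top_bot : ∀ {u d}, u ∈ A ∪ F ∪ X → d ∈ Y ∪ ⋃ i, C i → Q.Adj u d →
      u ∈ F ∧ (d ∈ Y ∨ ∃ i ≠ j, d ∈ C i) := by
    rintro u d ((hu | hu) | hu) (hd | hd) h <;> try obtain ⟨i, hd⟩ := Set.mem_iUnion.1 hd
    · exact absurd h.symm (hYA d hd u hu)
    · exact absurd h (hAC i u hu d hd)
    · exact ⟨hu, .inl hd⟩
    · exact ⟨hu, .inr ⟨i, fun hij => hFCj u hu d (hij ▸ hd) h, hd⟩⟩
    · exact absurd h (hXY u hu d hd)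
    · exact absurd h (hXC i u hu d hd)
  have F_bot : ∀ {u d}, u ∈ F → (d ∈ Y ∨ ∃ i ≠ j, d ∈ C i) → Q.Adj u d := by
    rintro u d hu (hd | ⟨i, hi, hd⟩)
    · exact hFY u hu d hd
    · exact hFC i hi u hu d hd
  refine ⟨j, ⟨fun v => ?_, ?_, ?_, cliqB, fun i => Set.subset_union_of_subset_right
    (Set.subset_iUnion C i) Y, dCC, fun hb hb' h => by_contra fun hik => hBB _ _ hik _ hb _ hb' h,
    ?_, ?_, fun hu hu' hd hd' h h' => F_bot (top_bot hu hd h).1 (top_bot hu' hd' h').2,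
    ?_, ?_, hnest⟩⟩
  · have hv : v ∈ A ∪ (⋃ i, B i) ∪ (⋃ i, C i) ∪ F ∪ X ∪ Y := hcover ▸ Set.mem_univ v
    simp only [Set.mem_union, Set.mem_iUnion] at hv ⊢
    tauto
  · exact isClique_union (isClique_union cliqA cliqF fun a ha f hf => (hFA f hf a ha).symm) cliqX
      fun u hu x hx => hu.elim (fun ha => (hXA x hx u ha).symm) (fun hf => hFX u hf x hx)
  · exact isClique_union cliqY (isClique_iUnion cliqC hCC) fun y hy c hc => by
      obtain ⟨i, hi⟩ := Set.mem_iUnion.1 hc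
      exact hYC i y hy c hi
  · rintro i b d hb (hd | hd) h
    · exact absurd h.symm (hYB i d hd b hb)
    · obtain ⟨k, hk⟩ := Set.mem_iUnion.1 hd
      obtain rfl : i = k := by_contra fun hik => hBC i k hik b hb d hk h
      exact hk
  · rintro i u b b' ((hu | hu) | hu) hb hb' h
    · exact hAB i u hu b' hb'
    · exact hFB i (fun hij => hFBj u hu b (hij ▸ hb) h) u hu b' hb'
    · obtain rfl : i = j := by_contra fun hij => hXB i hij u hu b hb h
      exact hXBj u hu b' hb'
  · intro i u d v v' hu hd h hv hv' huv
    have hF := (top_bot hu hd h).1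
    have hij : i ≠ j := by
      rintro rfl
      exact hv.elim (fun hv => hFBj u hF v hv huv) (fun hv => hFCj u hF v hv huv)
    exact hv'.elim (hFB i hij u hF v') (hFC i hij u hF v')
  · rintro i k u b c b' ((hu | hu) | hu) hb hc hb' h hc' hb''
    · exact absurd (hAB k u hu b' hb') hb''
    · exact by_contra fun hij => hc' (hFC i hij u hu c hc)
    · exact by_contra fun hij => hXB i hij u hu b hb h

theorem statement_18_general {W : Type} (t : ℕ)
    (Q : SimpleGraph W) (hQ : IsTMansion t Q) :
    (∀ n : ℕ, 4 ≤ n → Nonempty (cycleG n ↪g Q) → n = 5) ∧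
    IndFree Q (cycleG 4) ∧ IndFree Q (cycleG 6) ∧ IndFree Q (cycleG 7) := by
  obtain ⟨A, B, C, F, X, Y, hM⟩ := hQ
  obtain ⟨j, L⟩ := hM.exists_layeredPartition
  have hole : ∀ n : ℕ, 4 ≤ n → Nonempty (cycleG n ↪g Q) → n = 5 :=
    fun n hn ⟨f⟩ => L.eq_five (isHoleSeq_of_embedding f) hn
  exact ⟨hole, ⟨fun f => absurd (hole 4 le_rfl ⟨f⟩) (by norm_num)⟩,
    ⟨fun f => absurd (hole 6 (by norm_num) ⟨f⟩) (by norm_num)⟩,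
    ⟨fun f => absurd (hole 7 (by norm_num) ⟨f⟩) (by norm_num)⟩⟩

theorem statement_18 {W : Type} [Fintype W] (t : ℕ) (ht : 3 ≤ t)
    (Q : SimpleGraph W) (hQ : IsTMansion t Q) :
    (∀ n : ℕ, 4 ≤ n → Nonempty (cycleG n ↪g Q) → n = 5) ∧
    IndFree Q (cycleG 4) ∧ IndFree Q (cycleG 6) ∧ IndFree Q (cycleG 7) :=
  statement_18_general t Q hQ

end Paper
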